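/- Let (δ*, w*) be a pure-strategy Nash equilibrium of the zero-sum game where the row player chooses a perturbation function δ: D → B(ε) maximizing U(δ,w) = E[max(0, 1 - y·w^⊤(x+δ(x,y)))] + (λ/2)‖w‖₂² and the column player chooses w minimizing it. If feature i is non-robust, i.e. |μᵢ| ≤ ε where E[xᵢ|y] = yμᵢ, then wᵢ* = 0. -/

import Mathlib

/-!
Against a fixed `w`, the adversary's best response is `δ(x, y) = -ε y sign(w)`: it turns the payoff
into the robust loss `E[max(0, 1 - y wᵀx + ε‖w‖₁)] + λ/2 ‖w‖²`, which dominates the payoff of every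
admissible `δ`. Within a class the features are independent, so the part `ε|wᵢ| - y wᵢ xᵢ` of the
robust margin coming from feature `i` is independent of the rest `C`; when `|μᵢ| ≤ ε` it has
nonnegative mean, and convexity of `max 0` gives `E[max(0, C)] ≤ E[max(0, C + ε|wᵢ| - y wᵢ xᵢ)]`:
zeroing `wᵢ` does not increase the robust loss. With `w'` the weights `w*` with `wᵢ*` zeroed and
`δ'` the best response to `w*`, the equilibrium inequalities chain to
`U(δ', w*) ≤ U(δ*, w*) ≤ U(δ*, w') ≤ robust(w') ≤ robust(w*) - λ/2 wᵢ*² = U(δ', w*) - λ/2 wᵢ*²`.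
-/

open MeasureTheory ProbabilityTheory Finset
open scoped ENNReal

/-- The joint distribution of `(x,y)` on `ℝ^d × {-1,1}`: with probability `q` the label is `1`
and the features are drawn from the product measure `Measure.pi ηp` (features conditionally
independent given the label), with probability `1-q` the label is `-1` and the features are
drawn from `Measure.pi ηn`. -/
noncomputable def jointMeasure {d : ℕ} (ηp ηn : Fin d → Measure ℝ) (q : ℝ≥0∞) :
    Measure ((Fin d → ℝ) × ℝ) :=
  q • (Measure.pi ηp).map (fun x => (x, (1 : ℝ))) +
    (1 - q) • (Measure.pi ηn).map (fun x => (x, (-1 : ℝ)))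

noncomputable def svmLoss {d : ℕ} (μ : Measure ((Fin d → ℝ) × ℝ)) (lam : ℝ)
    (w : Fin d → ℝ) : ℝ :=
  (∫ p, max 0 (1 - p.2 * ∑ i, w i * p.1 i) ∂μ) + lam / 2 * ∑ i, (w i) ^ 2

/-- The payoff `U(δ, w)` of the game. -/
noncomputable def slarPayoff {d : ℕ} (μ : Measure ((Fin d → ℝ) × ℝ)) (lam : ℝ)
    (δ : (Fin d → ℝ) × ℝ → Fin d → ℝ) (w : Fin d → ℝ) : ℝ :=
  (∫ p, max 0 (1 - p.2 * ∑ i, w i * (p.1 i + δ p i)) ∂μ) + lam / 2 * ∑ i, (w i) ^ 2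

lemma integral_max_zero_le_integral_max_zero_add_of_indepFun {Ω : Type*} [MeasurableSpace Ω]
    {P : Measure Ω} {C Z : Ω → ℝ} (hCZ : IndepFun C Z P) (hC : Integrable C P)
    (hZ : Integrable Z P) (hZ_nonneg : 0 ≤ ∫ ω, Z ω ∂P) :
    ∫ ω, max 0 (C ω) ∂P ≤ ∫ ω, max 0 (C ω + Z ω) ∂P := by
  set step : ℝ → ℝ := fun t => if 0 ≤ t then 1 else 0
  have h_step : Measurable step :=
    Measurable.ite measurableSet_Ici measurable_const measurable_const
  have h_stepC : AEStronglyMeasurable (fun ω => step (C ω)) P :=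
    (h_step.comp_aemeasurable hC.aemeasurable).aestronglyMeasurable
  have h_int : Integrable (fun ω => step (C ω) * Z ω) P :=
    hZ.bdd_mul h_stepC (c := 1) (ae_of_all _ fun ω => by by_cases h : 0 ≤ C ω <;> simp [step, h])
  -- `step (C ω)` is a subgradient of `max 0` at `C ω`.
  have h_pointwise : ∀ ω, max 0 (C ω) + step (C ω) * Z ω ≤ max 0 (C ω + Z ω) := fun ω => by
    by_cases h : 0 ≤ C ω
    · simp [step, h]
    · simp only [step, h, if_false, zero_mul, add_zero, max_eq_left (not_le.mp h).le, le_max_left]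
  have h_corr : 0 ≤ ∫ ω, step (C ω) * Z ω ∂P := by
    have h_indep := (hCZ.comp h_step measurable_id).integral_fun_mul_eq_mul_integral h_stepC
      hZ.aestronglyMeasurable
    simp only [Function.comp_apply, id] at h_indep
    rw [h_indep]
    exact mul_nonneg (integral_nonneg fun ω => by by_cases h : 0 ≤ C ω <;> simp [step, h]) hZ_nonneg
  have h_pos : Integrable (fun ω => max 0 (C ω)) P := by simpa [max_comm] using hC.pos_part
  calc ∫ ω, max 0 (C ω) ∂P ≤ (∫ ω, max 0 (C ω) ∂P) + ∫ ω, step (C ω) * Z ω ∂P :=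
        le_add_of_nonneg_right h_corr
    _ = ∫ ω, (max 0 (C ω) + step (C ω) * Z ω) ∂P :=
        (integral_add h_pos h_int).symm
    _ ≤ ∫ ω, max 0 (C ω + Z ω) ∂P :=
        integral_mono (h_pos.add h_int)
          (by simpa [max_comm] using (hC.add hZ).pos_part) h_pointwise

lemma measurable_coe_sign : Measurable (fun t : ℝ => (SignType.sign t : ℝ)) := by
  refine Monotone.measurable fun a b hab => ?_
  have h := SignType.sign.monotone hab
  generalize SignType.sign a = u, SignType.sign b = v at h
  cases u <;> cases v <;> simp_all

lemma abs_coe_sign_le_one (t : ℝ) : |(SignType.sign t : ℝ)| ≤ 1 := by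
  generalize SignType.sign t = u
  cases u <;> simp

section RobustLoss

variable {ι : Type*}

noncomputable def worstPerturbation (ε : ℝ) (w : ι → ℝ) (p : (ι → ℝ) × ℝ) (j : ι) : ℝ :=
  -(ε * SignType.sign p.2 * SignType.sign (w j))

lemma measurable_worstPerturbation (ε : ℝ) (w : ι → ℝ) : Measurable (worstPerturbation ε w) :=
  measurable_pi_lambda _ fun _ =>
    (((measurable_coe_sign.comp measurable_snd).const_mul ε).mul_const _).neg

lemma abs_worstPerturbation_le {ε : ℝ} (hε : 0 ≤ ε) (w : ι → ℝ) (p : (ι → ℝ) × ℝ) (j : ι) :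
    |worstPerturbation ε w p j| ≤ ε := by
  rw [worstPerturbation, abs_neg, abs_mul, abs_mul, abs_of_nonneg hε, mul_assoc]
  exact mul_le_of_le_one_right hε <|
    mul_le_one₀ (abs_coe_sign_le_one _) (abs_nonneg _) (abs_coe_sign_le_one _)

variable [Fintype ι]

/-- The margin `1 - y wᵀx + ε‖w‖₁` under the worst `ℓ∞`-perturbation of size `ε`; the factor `|y|`,
equal to `1` on the support of the data, makes `hinge_worstPerturbation` hold pointwise. -/
def robustMargin (ε : ℝ) (w : ι → ℝ) (p : (ι → ℝ) × ℝ) : ℝ :=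
  1 - p.2 * ∑ j, w j * p.1 j + ε * |p.2| * ∑ j, |w j|

lemma continuous_robustMargin (ε : ℝ) (w : ι → ℝ) : Continuous (robustMargin ε w) := by
  unfold robustMargin; fun_prop

noncomputable def robustHinge (ε : ℝ) (w : ι → ℝ) (p : (ι → ℝ) × ℝ) : ℝ :=
  max 0 (robustMargin ε w p)

lemma measurable_robustHinge (ε : ℝ) (w : ι → ℝ) : Measurable (robustHinge ε w) :=
  measurable_const.max (continuous_robustMargin ε w).measurable

noncomputable def robustPayoff (μ : Measure ((ι → ℝ) × ℝ)) (lam ε : ℝ) (w : ι → ℝ) : ℝ :=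
  (∫ p, robustHinge ε w p ∂μ) + lam / 2 * ∑ j, (w j) ^ 2

lemma hinge_worstPerturbation (ε : ℝ) (w : ι → ℝ) (p : (ι → ℝ) × ℝ) :
    max 0 (1 - p.2 * ∑ j, w j * (p.1 j + worstPerturbation ε w p j)) = robustHinge ε w p := by
  have h : ∑ j, w j * (p.1 j + worstPerturbation ε w p j)
      = ∑ j, w j * p.1 j - ε * SignType.sign p.2 * ∑ j, |w j| := by
    simp only [worstPerturbation, mul_sum, ← sum_sub_distrib, ← self_mul_sign (w _)]
    exact sum_congr rfl fun j _ => by ring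
  rw [robustHinge, robustMargin, h, ← self_mul_sign p.2]
  congr 1
  ring

lemma hinge_le_robustHinge {ε : ℝ} (w δ : ι → ℝ) (hδ : ∀ j, |δ j| ≤ ε) (p : (ι → ℝ) × ℝ) :
    max 0 (1 - p.2 * ∑ j, w j * (p.1 j + δ j)) ≤ robustHinge ε w p := by
  have h : |p.2 * ∑ j, w j * δ j| ≤ ε * |p.2| * ∑ j, |w j| := by
    rw [abs_mul, mul_comm ε, mul_assoc, mul_sum]
    refine mul_le_mul_of_nonneg_left ((abs_sum_le_sum_abs _ _).trans
      (sum_le_sum fun j _ => ?_)) (abs_nonneg _)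
    rw [abs_mul, mul_comm ε]
    exact mul_le_mul_of_nonneg_left (hδ j) (abs_nonneg _)
  simp only [mul_add, sum_add_distrib, robustHinge, robustMargin]
  exact max_le_max le_rfl (by linarith [neg_abs_le (p.2 * ∑ j, w j * δ j)])

section Update

variable [DecidableEq ι]

lemma sum_update_zero_eq_sum_compl {M N : Type*} [Zero M] [AddCommMonoid N] {f : ι → M → N}
    (hf : ∀ j, f j 0 = 0) (w : ι → M) (i : ι) :
    ∑ j, f j (Function.update w i 0 j) = ∑ j ∈ {i}ᶜ, f j (w j) := by
  rw [Fintype.sum_eq_add_sum_compl i, Function.update_self, hf, zero_add]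
  exact sum_congr rfl fun j hj => by rw [Function.update_of_ne (by simpa using hj)]

lemma sum_eq_add_sum_update_zero {M N : Type*} [Zero M] [AddCommMonoid N] {f : ι → M → N}
    (hf : ∀ j, f j 0 = 0) (w : ι → M) (i : ι) :
    ∑ j, f j (w j) = f i (w i) + ∑ j, f j (Function.update w i 0 j) := by
  rw [sum_update_zero_eq_sum_compl hf, Fintype.sum_eq_add_sum_compl i]

lemma robustMargin_eq_update_zero_add (ε : ℝ) (w : ι → ℝ) (i : ι) (p : (ι → ℝ) × ℝ) :
    robustMargin ε w p
      = robustMargin ε (Function.update w i 0) p + (ε * |p.2| * |w i| - p.2 * w i * p.1 i) := by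
  rw [robustMargin, robustMargin,
    sum_eq_add_sum_update_zero (f := fun j t => t * p.1 j) (fun _ => zero_mul _) w i,
    sum_eq_add_sum_update_zero (f := fun _ t => |t|) (fun _ => abs_zero) w i]
  ring

lemma indepFun_eval_restrict_compl {X : ι → Type*} [∀ j, MeasurableSpace (X j)]
    (η : ∀ j, Measure (X j)) [∀ j, IsProbabilityMeasure (η j)] (i : ι) :
    IndepFun (fun x : ∀ j, X j => x i) (fun x (j : ↥({i}ᶜ : Finset ι)) => x j)
      (Measure.pi η) := by
  have h := (iIndepFun_pi (X := fun _ => id) fun j => aemeasurable_id (μ := η j)).indepFun_finset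
    {i} {i}ᶜ disjoint_compl_right fun j => measurable_pi_apply j
  exact h.comp (measurable_pi_apply ⟨i, mem_singleton_self i⟩) measurable_id

end Update

section Product

variable (η : ι → Measure ℝ)

lemma integrable_robustMargin_pi [∀ j, IsFiniteMeasure (η j)]
    (hη : ∀ j, Integrable (fun t : ℝ => t) (η j)) (ε : ℝ) (w : ι → ℝ) (y : ℝ) :
    Integrable (fun x => robustMargin ε w (x, y)) (Measure.pi η) :=
  ((integrable_const 1).sub ((integrable_finsetSum _ fun j _ =>
    (integrable_comp_eval (μ := η) (hη j)).const_mul (w j)).const_mul y)).add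
    (integrable_const (ε * |y| * ∑ j, |w j|))

lemma integrable_robustHinge_pi [∀ j, IsFiniteMeasure (η j)]
    (hη : ∀ j, Integrable (fun t : ℝ => t) (η j)) (ε : ℝ) (w : ι → ℝ) (y : ℝ) :
    Integrable (fun x => robustHinge ε w (x, y)) (Measure.pi η) := by
  simpa [robustHinge, max_comm] using (integrable_robustMargin_pi η hη ε w y).pos_part

lemma integral_robustHinge_update_zero_le [DecidableEq ι] [∀ j, IsProbabilityMeasure (η j)]
    (hη : ∀ j, Integrable (fun t : ℝ => t) (η j)) (ε y : ℝ) (w : ι → ℝ) (i : ι)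
    (hmean : y * w i * ∫ t, t ∂η i ≤ ε * |y| * |w i|) :
    ∫ x, robustHinge ε (Function.update w i 0) (x, y) ∂Measure.pi η
      ≤ ∫ x, robustHinge ε w (x, y) ∂Measure.pi η := by
  set w' := Function.update w i 0
  set g : ℝ → ℝ := fun t => ε * |y| * |w i| - y * w i * t
  have hg : Integrable g (η i) := (integrable_const _).sub ((hη i).const_mul _)
  have hg_nonneg : 0 ≤ ∫ x : ι → ℝ, g (x i) ∂Measure.pi η := by
    rw [integral_comp_eval hg.aestronglyMeasurable, integral_sub (integrable_const _)
      ((hη i).const_mul _), integral_const, integral_const_mul]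
    simp only [probReal_univ, one_smul]
    linarith
  have h_indep : IndepFun (fun x => robustMargin ε w' (x, y)) (fun x => g (x i))
      (Measure.pi η) := by
    have h := (indepFun_eval_restrict_compl η i).comp (φ := g)
      (ψ := fun v : ↥({i}ᶜ : Finset ι) → ℝ =>
        1 - y * ∑ j : ↥({i}ᶜ : Finset ι), w j * v j + ε * |y| * ∑ j ∈ {i}ᶜ, |w j|)
      (by fun_prop) (by fun_prop)
    refine h.symm.congr (ae_of_all _ fun x => ?_) (ae_of_all _ fun x => rfl)
    rw [Function.comp_apply, sum_coe_sort {i}ᶜ (fun j => w j * x j)]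
    simp only [robustMargin, w',
      sum_update_zero_eq_sum_compl (f := fun j t => t * x j) (fun _ => zero_mul _),
      sum_update_zero_eq_sum_compl (f := fun (_ : ι) (t : ℝ) => |t|) (fun _ => abs_zero)]
  simp only [robustHinge, robustMargin_eq_update_zero_add ε w i]
  exact integral_max_zero_le_integral_max_zero_add_of_indepFun h_indep
    (integrable_robustMargin_pi η hη ε w' y) (integrable_comp_eval (μ := η) hg) hg_nonneg

end Product

end RobustLoss

section Game

variable {d : ℕ}

lemma slarPayoff_worstPerturbation (μ : Measure ((Fin d → ℝ) × ℝ)) (lam ε : ℝ) (w : Fin d → ℝ) :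
    slarPayoff μ lam (worstPerturbation ε w) w = robustPayoff μ lam ε w := by
  simp only [slarPayoff, robustPayoff, hinge_worstPerturbation]

lemma slarPayoff_le_robustPayoff {μ : Measure ((Fin d → ℝ) × ℝ)} {lam ε : ℝ}
    {δ : (Fin d → ℝ) × ℝ → Fin d → ℝ} (hδ : ∀ p j, |δ p j| ≤ ε) {w : Fin d → ℝ}
    (hw : Integrable (robustHinge ε w) μ) :
    slarPayoff μ lam δ w ≤ robustPayoff μ lam ε w :=
  add_le_add_left (integral_mono_of_nonneg (ae_of_all _ fun _ => le_max_left _ _) hw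
    (ae_of_all _ fun p => hinge_le_robustHinge w (δ p) (hδ p) p)) _

variable {ηp ηn : Fin d → Measure ℝ} {q : ℝ≥0∞} {f : (Fin d → ℝ) × ℝ → ℝ}

lemma integrable_jointMeasure (hq : q ≠ ∞) (hf : Measurable f)
    (hp : Integrable (fun x => f (x, 1)) (Measure.pi ηp))
    (hn : Integrable (fun x => f (x, -1)) (Measure.pi ηn)) :
    Integrable f (jointMeasure ηp ηn q) :=
  Integrable.add_measure
    (((integrable_map_measure hf.aestronglyMeasurable (by fun_prop)).2 hp).smul_measure hq)
    (((integrable_map_measure hf.aestronglyMeasurable (by fun_prop)).2 hn).smul_measure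
      (by finiteness))

lemma integral_jointMeasure (hq : q ≠ ∞) (hf : Measurable f)
    (hp : Integrable (fun x => f (x, 1)) (Measure.pi ηp))
    (hn : Integrable (fun x => f (x, -1)) (Measure.pi ηn)) :
    ∫ p, f p ∂jointMeasure ηp ηn q
      = q.toReal * ∫ x, f (x, 1) ∂Measure.pi ηp
        + (1 - q).toReal * ∫ x, f (x, -1) ∂Measure.pi ηn := by
  have h := integrable_jointMeasure hq hf hp hn
  rw [jointMeasure] at h ⊢
  rw [integral_add_measure h.left_of_add_measure h.right_of_add_measure,
    integral_smul_measure, integral_smul_measure,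
    integral_map (by fun_prop) hf.aestronglyMeasurable,
    integral_map (by fun_prop) hf.aestronglyMeasurable]
  rfl

lemma integrable_robustHinge_jointMeasure [∀ j, IsFiniteMeasure (ηp j)]
    [∀ j, IsFiniteMeasure (ηn j)] (hq : q ≠ ∞) (hp : ∀ j, Integrable (fun t : ℝ => t) (ηp j))
    (hn : ∀ j, Integrable (fun t : ℝ => t) (ηn j)) (ε : ℝ) (w : Fin d → ℝ) :
    Integrable (robustHinge ε w) (jointMeasure ηp ηn q) :=
  integrable_jointMeasure hq (measurable_robustHinge ε w)
    (integrable_robustHinge_pi ηp hp ε w 1) (integrable_robustHinge_pi ηn hn ε w (-1))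

lemma robustPayoff_update_zero_add_le [∀ j, IsProbabilityMeasure (ηp j)]
    [∀ j, IsProbabilityMeasure (ηn j)] (hq : q ≠ ∞) (hp : ∀ j, Integrable (fun t : ℝ => t) (ηp j))
    (hn : ∀ j, Integrable (fun t : ℝ => t) (ηn j)) (lam ε : ℝ) (w : Fin d → ℝ) (i : Fin d)
    {m : ℝ} (hmp : ∫ t, t ∂ηp i = m) (hmn : ∫ t, t ∂ηn i = -m) (hm : |m| ≤ ε) :
    robustPayoff (jointMeasure ηp ηn q) lam ε (Function.update w i 0) + lam / 2 * w i ^ 2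
      ≤ robustPayoff (jointMeasure ηp ηn q) lam ε w := by
  have h_corr : w i * m ≤ ε * |w i| := by
    calc w i * m ≤ |w i| * |m| := (le_abs_self _).trans (abs_mul _ _).le
      _ ≤ ε * |w i| := by rw [mul_comm ε]; exact mul_le_mul_of_nonneg_left hm (abs_nonneg _)
  have h_pos := integral_robustHinge_update_zero_le ηp hp ε 1 w i (by rw [hmp]; simpa using h_corr)
  have h_neg := integral_robustHinge_update_zero_le ηn hn ε (-1) w i
    (by rw [hmn]; simpa using h_corr)
  have h_reg := sum_eq_add_sum_update_zero (f := fun (_ : Fin d) (t : ℝ) => t ^ 2)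
    (fun _ => zero_pow two_ne_zero) w i
  simp only [robustPayoff, h_reg]
  rw [integral_jointMeasure hq (measurable_robustHinge ε _) (integrable_robustHinge_pi ηp hp ε _ 1)
      (integrable_robustHinge_pi ηn hn ε _ (-1)),
    integral_jointMeasure hq (measurable_robustHinge ε _) (integrable_robustHinge_pi ηp hp ε _ 1)
      (integrable_robustHinge_pi ηn hn ε _ (-1))]
  linarith [mul_le_mul_of_nonneg_left h_pos (ENNReal.toReal_nonneg (a := q)),
    mul_le_mul_of_nonneg_left h_neg (ENNReal.toReal_nonneg (a := 1 - q))]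

end Game

theorem nash_equilibrium_is_robust_general {d : ℕ} (ηp ηn : Fin d → Measure ℝ)
    [∀ i, IsProbabilityMeasure (ηp i)] [∀ i, IsProbabilityMeasure (ηn i)]
    (q : ℝ≥0∞) (hq : q ≤ 1) (lam ε : ℝ) (hlam : 0 < lam) (hε : 0 ≤ ε)
    (μv : Fin d → ℝ)
    (hip : ∀ j, Integrable (fun t : ℝ => t) (ηp j))
    (hin : ∀ j, Integrable (fun t : ℝ => t) (ηn j))
    (hmeanp : ∀ i, (∫ t, t ∂(ηp i)) = μv i)
    (hmeann : ∀ i, (∫ t, t ∂(ηn i)) = -(μv i))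
    (δstar : (Fin d → ℝ) × ℝ → Fin d → ℝ) (wstar : Fin d → ℝ)
    (hδstar_bdd : ∀ p i, |δstar p i| ≤ ε)
    (hrow : ∀ δ : (Fin d → ℝ) × ℝ → Fin d → ℝ, Measurable δ → (∀ p i, |δ p i| ≤ ε) →
      slarPayoff (jointMeasure ηp ηn q) lam δ wstar ≤
        slarPayoff (jointMeasure ηp ηn q) lam δstar wstar)
    (hcol : ∀ w, slarPayoff (jointMeasure ηp ηn q) lam δstar wstar ≤
      slarPayoff (jointMeasure ηp ηn q) lam δstar w)
    (i : Fin d) (hnonrobust : |μv i| ≤ ε) :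
    wstar i = 0 := by
  have hq_top : q ≠ ∞ := ne_top_of_le_ne_top ENNReal.one_ne_top hq
  set μ := jointMeasure ηp ηn q
  set w' := Function.update wstar i 0
  have h_best : robustPayoff μ lam ε wstar ≤ slarPayoff μ lam δstar wstar := by
    rw [← slarPayoff_worstPerturbation]
    exact hrow _ (measurable_worstPerturbation ε wstar) (abs_worstPerturbation_le hε wstar)
  have h_dev : slarPayoff μ lam δstar w' ≤ robustPayoff μ lam ε w' :=
    slarPayoff_le_robustPayoff hδstar_bdd (integrable_robustHinge_jointMeasure hq_top hip hin ε w')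
  have h_drop : robustPayoff μ lam ε w' + lam / 2 * wstar i ^ 2 ≤ robustPayoff μ lam ε wstar :=
    robustPayoff_update_zero_add_le hq_top hip hin lam ε wstar i (hmeanp i) (hmeann i) hnonrobust
  have h_sq : lam / 2 * wstar i ^ 2 ≤ 0 := by linarith [hcol w']
  exact pow_eq_zero_iff two_ne_zero |>.mp <|
    le_antisymm (nonpos_of_mul_nonpos_right h_sq (by positivity)) (sq_nonneg _)

/-- at a pure-strategy Nash equilibrium `(δ*, w*)` of the SLAR game, every
non-robust feature `i` (one with `|μᵢ| ≤ ε`, where `E[xᵢ|y] = yμᵢ`) receives zero weight: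
`wᵢ* = 0`. -/
theorem nash_equilibrium_is_robust {d : ℕ} (ηp ηn : Fin d → Measure ℝ)
    [∀ i, IsProbabilityMeasure (ηp i)] [∀ i, IsProbabilityMeasure (ηn i)]
    (q : ℝ≥0∞) (hq : q ≤ 1) (lam ε : ℝ) (hlam : 0 < lam) (hε : 0 ≤ ε)
    (μv : Fin d → ℝ)
    (hip : ∀ j, Integrable (fun t : ℝ => t) (ηp j))
    (hin : ∀ j, Integrable (fun t : ℝ => t) (ηn j))
    (hmeanp : ∀ i, (∫ t, t ∂(ηp i)) = μv i)
    (hmeann : ∀ i, (∫ t, t ∂(ηn i)) = -(μv i))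
    (δstar : (Fin d → ℝ) × ℝ → Fin d → ℝ) (wstar : Fin d → ℝ)
    (hδstar_meas : Measurable δstar)
    (hδstar_bdd : ∀ p i, |δstar p i| ≤ ε)
    (hrow : ∀ δ : (Fin d → ℝ) × ℝ → Fin d → ℝ, Measurable δ → (∀ p i, |δ p i| ≤ ε) →
      slarPayoff (jointMeasure ηp ηn q) lam δ wstar ≤
        slarPayoff (jointMeasure ηp ηn q) lam δstar wstar)
    (hcol : ∀ w, slarPayoff (jointMeasure ηp ηn q) lam δstar wstar ≤
      slarPayoff (jointMeasure ηp ηn q) lam δstar w)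
    (i : Fin d) (hnonrobust : |μv i| ≤ ε) :
    wstar i = 0 :=
  nash_equilibrium_is_robust_general ηp ηn q hq lam ε hlam hε μv hip hin hmeanp hmeann δstar wstar
    hδstar_bdd hrow hcol i hnonrobust
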